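/- For every n ≥ 0 there exists an indecomposable representation M of Q with dimension vector (n, n+1, n+1, n+1) together with a short exact sequence of representations 0 → P₄ⁿ⁺¹ → P₂ ⊕ P₃ ⊕ P₁ⁿ → M → 0. -/

import Mathlib

variable (k : Type) [Field k]

/-- A finite-dimensional representation of the quiver `Q` with vertices `1,2,3,4`
and arrows `a : 1 → 2`, `b : 1 → 3`, `c : 2 → 4`, `d : 3 → 4`. -/
structure QRep where
  V1 : Type
  V2 : Type
  V3 : Type
  V4 : Type
  [acg1 : AddCommGroup V1]
  [acg2 : AddCommGroup V2]
  [acg3 : AddCommGroup V3]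
  [acg4 : AddCommGroup V4]
  [mod1 : Module k V1]
  [mod2 : Module k V2]
  [mod3 : Module k V3]
  [mod4 : Module k V4]
  [fin1 : FiniteDimensional k V1]
  [fin2 : FiniteDimensional k V2]
  [fin3 : FiniteDimensional k V3]
  [fin4 : FiniteDimensional k V4]
  ma : V1 →ₗ[k] V2
  mb : V1 →ₗ[k] V3
  mc : V2 →ₗ[k] V4
  md : V3 →ₗ[k] V4

attribute [instance] QRep.acg1 QRep.acg2 QRep.acg3 QRep.acg4
  QRep.mod1 QRep.mod2 QRep.mod3 QRep.mod4
  QRep.fin1 QRep.fin2 QRep.fin3 QRep.fin4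

variable {k}

/-- Morphisms of representations of `Q`. -/
@[ext]
structure QHom (M N : QRep k) where
  f1 : M.V1 →ₗ[k] N.V1
  f2 : M.V2 →ₗ[k] N.V2
  f3 : M.V3 →ₗ[k] N.V3
  f4 : M.V4 →ₗ[k] N.V4
  comm_a : f2 ∘ₗ M.ma = N.ma ∘ₗ f1
  comm_b : f3 ∘ₗ M.mb = N.mb ∘ₗ f1
  comm_c : f4 ∘ₗ M.mc = N.mc ∘ₗ f2
  comm_d : f4 ∘ₗ M.md = N.md ∘ₗ f3

/-- Two representations are isomorphic iff there is a morphism all of whose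
components are bijective. -/
def QIso (M N : QRep k) : Prop :=
  ∃ f : QHom M N, Function.Bijective f.f1 ∧ Function.Bijective f.f2 ∧
    Function.Bijective f.f3 ∧ Function.Bijective f.f4

/-- The zero representation(s). -/
def QRep.IsZeroRep (M : QRep k) : Prop :=
  Subsingleton M.V1 ∧ Subsingleton M.V2 ∧ Subsingleton M.V3 ∧ Subsingleton M.V4

/-- Vertexwise direct sum of representations. -/
def QRep.dsum (M N : QRep k) : QRep k where
  V1 := M.V1 × N.V1
  V2 := M.V2 × N.V2
  V3 := M.V3 × N.V3
  V4 := M.V4 × N.V4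
  ma := M.ma.prodMap N.ma
  mb := M.mb.prodMap N.mb
  mc := M.mc.prodMap N.mc
  md := M.md.prodMap N.md

/-- Direct sum of `n` copies of a representation. -/
def QRep.dpow (M : QRep k) (n : ℕ) : QRep k where
  V1 := Fin n → M.V1
  V2 := Fin n → M.V2
  V3 := Fin n → M.V3
  V4 := Fin n → M.V4
  ma := M.ma.compLeft (Fin n)
  mb := M.mb.compLeft (Fin n)
  mc := M.mc.compLeft (Fin n)
  md := M.md.compLeft (Fin n)

/-- A representation is indecomposable if it is nonzero and not isomorphic to a
direct sum of two nonzero representations. -/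
def QRep.Indecomposable (M : QRep k) : Prop :=
  ¬ M.IsZeroRep ∧ ∀ A B : QRep k, QIso M (A.dsum B) → A.IsZeroRep ∨ B.IsZeroRep

/-- `0 → A → B → C → 0` is short exact (vertexwise). -/
def QShortExact {A B C : QRep k} (f : QHom A B) (g : QHom B C) : Prop :=
  (Function.Injective f.f1 ∧ Function.Injective f.f2 ∧
    Function.Injective f.f3 ∧ Function.Injective f.f4) ∧
  (Function.Surjective g.f1 ∧ Function.Surjective g.f2 ∧
    Function.Surjective g.f3 ∧ Function.Surjective g.f4) ∧
  (LinearMap.range f.f1 = LinearMap.ker g.f1 ∧ LinearMap.range f.f2 = LinearMap.ker g.f2 ∧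
    LinearMap.range f.f3 = LinearMap.ker g.f3 ∧ LinearMap.range f.f4 = LinearMap.ker g.f4)

variable (k)

/-- The `n×n` Jordan block with eigenvalue `lam`, as a linear endomorphism of `kⁿ`. -/
def jordan (n : ℕ) (lam : k) : (Fin n → k) →ₗ[k] (Fin n → k) :=
  Matrix.mulVecLin (Matrix.of fun i j : Fin n =>
    if i = j then lam else if (i : ℕ) + 1 = (j : ℕ) then 1 else 0)

/-- The representation `M_n(λ) = (kⁿ,kⁿ,kⁿ,kⁿ; id,id,id,J_n(λ))`. -/
def Mlam (n : ℕ) (lam : k) : QRep k where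
  V1 := Fin n → k
  V2 := Fin n → k
  V3 := Fin n → k
  V4 := Fin n → k
  ma := LinearMap.id
  mb := LinearMap.id
  mc := LinearMap.id
  md := jordan k n lam

/-- The indecomposable projective `P₁ = (k,k,k,k²)`. -/
def P1 : QRep k where
  V1 := k
  V2 := k
  V3 := k
  V4 := k × k
  ma := LinearMap.id
  mb := LinearMap.id
  mc := LinearMap.inl k k k
  md := LinearMap.inr k k k

/-- The indecomposable projective `P₂ = (0,k,0,k)`. -/
def P2 : QRep k where
  V1 := Fin 0 → k
  V2 := k
  V3 := Fin 0 → k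
  V4 := k
  ma := 0
  mb := 0
  mc := LinearMap.id
  md := 0

/-- The indecomposable projective `P₃ = (0,0,k,k)`. -/
def P3 : QRep k where
  V1 := Fin 0 → k
  V2 := Fin 0 → k
  V3 := k
  V4 := k
  ma := 0
  mb := 0
  mc := 0
  md := LinearMap.id

/-- The indecomposable projective `P₄ = (0,0,0,k)`. -/
def P4 : QRep k where
  V1 := Fin 0 → k
  V2 := Fin 0 → k
  V3 := Fin 0 → k
  V4 := k
  ma := 0
  mb := 0
  mc := 0
  md := 0

/-!
Write `M` for the representation with `kⁿ` at vertex 1 and `kⁿ⁺¹` at vertices 2, 3, 4, whose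
arrows `a`, `b` are the embeddings `x ↦ (x, 0)` and `x ↦ (0, x)` and whose arrows `c`, `d` are
the identity. An endomorphism of `M` is determined by its components `f` at vertex 1 and `g` at
vertex 4, and `(f, g)` intertwines both embeddings. Since `(0, (y, 0)) = ((0, y), 0)`, the map `f`
in turn intertwines the two embeddings `kⁿ⁻¹ → kⁿ` with some endomorphism of `kⁿ⁻¹`, so by
induction on `n` the endomorphism is a scalar. A decomposition `M ≅ A ⊕ B` transports the
projection onto `A` to an endomorphism of `M`; if it is the scalar `c`, then so is the projection
itself, which forces `B = 0` when `c = 1` and `A = 0` otherwise.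

The cover `P₂ ⊕ P₃ ⊕ P₁ⁿ → M` sends the generators of `P₂` and `P₃` to the last and the first
basis vector of `kⁿ⁺¹`. It is bijective at vertices 1, 2, 3. At vertex 4 it is onto, so its kernel
has dimension `(2n + 2) - (n + 1) = n + 1`; hence the kernel is the image of the injective map
`w ↦ (w_n, -w_0, (w_i, -w_{i+1})_i)` from `P₄ⁿ⁺¹`, which the cover kills.
-/

variable {k}

theorem LinearEquiv.symm_comp_eq_comp_symm {V₁ V₂ W₁ W₂ : Type*}
    [AddCommGroup V₁] [AddCommGroup V₂] [AddCommGroup W₁] [AddCommGroup W₂]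
    [Module k V₁] [Module k V₂] [Module k W₁] [Module k W₂]
    {e₁ : V₁ ≃ₗ[k] W₁} {e₂ : V₂ ≃ₗ[k] W₂} {u : V₁ →ₗ[k] V₂} {v : W₁ →ₗ[k] W₂}
    (h : e₂.toLinearMap ∘ₗ u = v ∘ₗ e₁) : e₂.symm.toLinearMap ∘ₗ v = u ∘ₗ e₁.symm := by
  rw [LinearEquiv.toLinearMap_symm_comp_eq, ← LinearMap.comp_assoc,
    LinearEquiv.eq_comp_toLinearMap_symm, h]

namespace QHom

variable {M N P : QRep k}

def comp (g : QHom N P) (f : QHom M N) : QHom M P where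
  f1 := g.f1 ∘ₗ f.f1
  f2 := g.f2 ∘ₗ f.f2
  f3 := g.f3 ∘ₗ f.f3
  f4 := g.f4 ∘ₗ f.f4
  comm_a := by
    rw [LinearMap.comp_assoc, f.comm_a, ← LinearMap.comp_assoc, g.comm_a, LinearMap.comp_assoc]
  comm_b := by
    rw [LinearMap.comp_assoc, f.comm_b, ← LinearMap.comp_assoc, g.comm_b, LinearMap.comp_assoc]
  comm_c := by
    rw [LinearMap.comp_assoc, f.comm_c, ← LinearMap.comp_assoc, g.comm_c, LinearMap.comp_assoc]
  comm_d := by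
    rw [LinearMap.comp_assoc, f.comm_d, ← LinearMap.comp_assoc, g.comm_d, LinearMap.comp_assoc]

variable (M) in
def scalar (c : k) : QHom M M where
  f1 := c • LinearMap.id
  f2 := c • LinearMap.id
  f3 := c • LinearMap.id
  f4 := c • LinearMap.id
  comm_a := by rw [LinearMap.smul_comp, LinearMap.comp_smul, LinearMap.id_comp, LinearMap.comp_id]
  comm_b := by rw [LinearMap.smul_comp, LinearMap.comp_smul, LinearMap.id_comp, LinearMap.comp_id]
  comm_c := by rw [LinearMap.smul_comp, LinearMap.comp_smul, LinearMap.id_comp, LinearMap.comp_id]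
  comm_d := by rw [LinearMap.smul_comp, LinearMap.comp_smul, LinearMap.id_comp, LinearMap.comp_id]

noncomputable def invOfBijective (f : QHom M N) (h1 : Function.Bijective f.f1)
    (h2 : Function.Bijective f.f2) (h3 : Function.Bijective f.f3)
    (h4 : Function.Bijective f.f4) : QHom N M where
  f1 := (LinearEquiv.ofBijective f.f1 h1).symm
  f2 := (LinearEquiv.ofBijective f.f2 h2).symm
  f3 := (LinearEquiv.ofBijective f.f3 h3).symm
  f4 := (LinearEquiv.ofBijective f.f4 h4).symm
  comm_a := LinearEquiv.symm_comp_eq_comp_symm f.comm_a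
  comm_b := LinearEquiv.symm_comp_eq_comp_symm f.comm_b
  comm_c := LinearEquiv.symm_comp_eq_comp_symm f.comm_c
  comm_d := LinearEquiv.symm_comp_eq_comp_symm f.comm_d

end QHom

def QRep.projFst (A B : QRep k) : QHom (A.dsum B) (A.dsum B) where
  f1 := LinearMap.inl k _ _ ∘ₗ LinearMap.fst k _ _
  f2 := LinearMap.inl k _ _ ∘ₗ LinearMap.fst k _ _
  f3 := LinearMap.inl k _ _ ∘ₗ LinearMap.fst k _ _
  f4 := LinearMap.inl k _ _ ∘ₗ LinearMap.fst k _ _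
  comm_a := LinearMap.ext fun _ => Prod.ext rfl (map_zero B.ma).symm
  comm_b := LinearMap.ext fun _ => Prod.ext rfl (map_zero B.mb).symm
  comm_c := LinearMap.ext fun _ => Prod.ext rfl (map_zero B.mc).symm
  comm_d := LinearMap.ext fun _ => Prod.ext rfl (map_zero B.md).symm

theorem subsingleton_of_conj_inl_comp_fst_eq_smul {V X Y : Type*}
    [AddCommGroup V] [AddCommGroup X] [AddCommGroup Y] [Module k V] [Module k X] [Module k Y]
    (φ : V →ₗ[k] X × Y) (hφ : Function.Bijective φ) {c : k}
    (h : (LinearEquiv.ofBijective φ hφ).symm.toLinearMap ∘ₗ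
      (LinearMap.inl k X Y ∘ₗ LinearMap.fst k X Y) ∘ₗ φ = c • LinearMap.id) :
    (c = 1 → Subsingleton Y) ∧ (c ≠ 1 → Subsingleton X) := by
  have hp : ∀ y : X × Y, (y.1, (0 : Y)) = c • y := by
    intro y
    obtain ⟨x, rfl⟩ := hφ.2 y
    simpa using congrArg (LinearEquiv.ofBijective φ hφ) (LinearMap.congr_fun h x)
  constructor
  · rintro rfl
    exact subsingleton_of_forall_eq 0 fun b => by simpa using (congrArg Prod.snd (hp (0, b))).symm
  · intro hc
    refine subsingleton_of_forall_eq 0 fun a => ?_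
    have ha : (1 - c) • a = 0 := by
      rw [sub_smul, one_smul, sub_eq_zero]
      simpa using congrArg Prod.fst (hp (a, 0))
    exact (smul_eq_zero.mp ha).resolve_left (sub_ne_zero.mpr (Ne.symm hc))

theorem QRep.indecomposable_of_forall_eq_scalar {M : QRep k} (hM : ¬ M.IsZeroRep)
    (h : ∀ e : QHom M M, ∃ c : k, e = QHom.scalar M c) : M.Indecomposable := by
  refine ⟨hM, fun A B ⟨φ, h1, h2, h3, h4⟩ => ?_⟩
  obtain ⟨c, hc⟩ := h (((φ.invOfBijective h1 h2 h3 h4).comp (A.projFst B)).comp φ)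
  have v1 := subsingleton_of_conj_inl_comp_fst_eq_smul φ.f1 h1 (c := c) (congrArg QHom.f1 hc)
  have v2 := subsingleton_of_conj_inl_comp_fst_eq_smul φ.f2 h2 (c := c) (congrArg QHom.f2 hc)
  have v3 := subsingleton_of_conj_inl_comp_fst_eq_smul φ.f3 h3 (c := c) (congrArg QHom.f3 hc)
  have v4 := subsingleton_of_conj_inl_comp_fst_eq_smul φ.f4 h4 (c := c) (congrArg QHom.f4 hc)
  by_cases hc1 : c = 1
  · exact Or.inr ⟨v1.1 hc1, v2.1 hc1, v3.1 hc1, v4.1 hc1⟩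
  · exact Or.inl ⟨v1.2 hc1, v2.2 hc1, v3.2 hc1, v4.2 hc1⟩

theorem Fin.cons_eq_snoc_iff {α : Type*} {n : ℕ} {x y : α} {a b : Fin (n + 1) → α} :
    (Fin.cons x a : Fin (n + 2) → α) = Fin.snoc b y ↔
      ∃ z, a = Fin.snoc z y ∧ b = Fin.cons x z := by
  constructor
  · intro h
    have hy : a (Fin.last n) = y := by simpa using congrFun h (Fin.last (n + 1))
    have ha : a = Fin.snoc (Fin.init a) y := by rw [← hy, Fin.snoc_init_self]
    refine ⟨Fin.init a, ha, ?_⟩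
    rw [ha, Fin.cons_snoc_eq_snoc_cons] at h
    exact (Fin.snoc_injective2 h).1.symm
  · rintro ⟨z, rfl, rfl⟩
    exact Fin.cons_snoc_eq_snoc_cons x z y

variable (k) in
def snocLinear (n : ℕ) : ((Fin n → k) × k) →ₗ[k] (Fin (n + 1) → k) where
  toFun p := Fin.snoc p.1 p.2
  map_add' p q := by ext i; refine Fin.lastCases ?_ (fun i => ?_) i <;> simp
  map_smul' c p := by ext i; refine Fin.lastCases ?_ (fun i => ?_) i <;> simp

variable (k) in
def snocZero (n : ℕ) : (Fin n → k) →ₗ[k] (Fin (n + 1) → k) :=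
  snocLinear k n ∘ₗ LinearMap.inl k _ k

variable (k) in
def consZero (n : ℕ) : (Fin n → k) →ₗ[k] (Fin (n + 1) → k) :=
  (Fin.consLinearEquiv k fun _ => k).toLinearMap ∘ₗ LinearMap.inr k k _

@[simp]
theorem snocZero_apply {n : ℕ} (x : Fin n → k) : snocZero k n x = Fin.snoc x 0 := rfl

@[simp]
theorem consZero_apply {n : ℕ} (x : Fin n → k) : consZero k n x = Fin.cons 0 x := rfl

theorem snocZero_injective (n : ℕ) : Function.Injective (snocZero k n) :=
  fun _ _ h => (Fin.snoc_injective2 (α := fun _ => k) h).1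

theorem exists_snocZero_add_consZero (n : ℕ) (v : Fin (n + 2) → k) :
    ∃ x y, snocZero k (n + 1) x + consZero k (n + 1) y = v := by
  refine ⟨Fin.init v, Fin.snoc 0 (v (Fin.last _)), ?_⟩
  rw [snocZero_apply, consZero_apply, Fin.cons_snoc_eq_snoc_cons,
    show (Fin.cons 0 0 : Fin (n + 1) → k) = 0 from Matrix.cons_zero_zero]
  ext i
  refine Fin.lastCases ?_ (fun i => ?_) i <;> simp [Fin.init]

theorem exists_eq_smul_id_of_intertwines_snocZero_consZero {n : ℕ}
    (f : (Fin n → k) →ₗ[k] (Fin n → k)) (g : (Fin (n + 1) → k) →ₗ[k] (Fin (n + 1) → k))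
    (hs : ∀ x, g (snocZero k n x) = snocZero k n (f x))
    (hc : ∀ x, g (consZero k n x) = consZero k n (f x)) :
    ∃ c : k, g = c • LinearMap.id := by
  induction n with
  | zero => exact (g.existsUnique_eq_smul_id_of_finrank_eq_one (Module.finrank_fin_fun k)).exists
  | succ m ih =>
    -- `g` sends `(0, (y, 0)) = ((0, y), 0)` to `(0, f (y, 0)) = (f (0, y), 0)`.
    have hf : ∀ y, ∃ z, f (snocZero k m y) = snocZero k m z ∧
        f (consZero k m y) = consZero k m z := by
      intro y
      have h := (hc (snocZero k m y)).symm.trans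
        ((congrArg g (Fin.cons_snoc_eq_snoc_cons 0 y 0)).trans (hs (consZero k m y)))
      exact Fin.cons_eq_snoc_iff.mp h
    let f₀ := LinearMap.funLeft k k Fin.castSucc ∘ₗ f ∘ₗ snocZero k m
    have hf₀ : ∀ y, f (snocZero k m y) = snocZero k m (f₀ y) ∧
        f (consZero k m y) = consZero k m (f₀ y) := by
      intro y
      obtain ⟨z, hz⟩ := hf y
      have hz₀ : f₀ y = z := by
        change Fin.init (f (snocZero k m y)) = z
        rw [hz.1, snocZero_apply, Fin.init_snoc]
      rwa [hz₀]
    obtain ⟨c, hfc⟩ := ih f₀ f (fun y => (hf₀ y).1) (fun y => (hf₀ y).2)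
    refine ⟨c, LinearMap.ext fun v => ?_⟩
    obtain ⟨x, y, rfl⟩ := exists_snocZero_add_consZero m v
    simp only [map_add, hs, hc, hfc, LinearMap.smul_apply, LinearMap.id_apply, map_smul]

variable (k) in
def snocConsRep (n : ℕ) : QRep k where
  V1 := Fin n → k
  V2 := Fin (n + 1) → k
  V3 := Fin (n + 1) → k
  V4 := Fin (n + 1) → k
  ma := snocZero k n
  mb := consZero k n
  mc := LinearMap.id
  md := LinearMap.id

theorem snocConsRep_exists_eq_scalar {n : ℕ} (e : QHom (snocConsRep k n) (snocConsRep k n)) :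
    ∃ c : k, e = QHom.scalar _ c := by
  have h42 : e.f4 = e.f2 := e.comm_c
  have h43 : e.f4 = e.f3 := e.comm_d
  have hs : ∀ x, e.f4 (snocZero k n x) = snocZero k n (e.f1 x) := by
    rw [h42]; exact LinearMap.congr_fun e.comm_a
  have hc : ∀ x, e.f4 (consZero k n x) = consZero k n (e.f1 x) := by
    rw [h43]; exact LinearMap.congr_fun e.comm_b
  obtain ⟨c, hc4⟩ := exists_eq_smul_id_of_intertwines_snocZero_consZero e.f1 e.f4 hs hc
  have hc1 : e.f1 = c • LinearMap.id := LinearMap.ext fun (x : Fin n → k) =>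
    snocZero_injective n <| (hs x).symm.trans <| hc4 ▸ (map_smul (snocZero k n) c x).symm
  exact ⟨c, QHom.ext hc1 (h42 ▸ hc4) (h43 ▸ hc4) hc4⟩

theorem snocConsRep_indecomposable (n : ℕ) : (snocConsRep k n).Indecomposable :=
  QRep.indecomposable_of_forall_eq_scalar (fun h => not_subsingleton (Fin (n + 1) → k) h.2.2.2)
    snocConsRep_exists_eq_scalar

theorem LinearMap.range_eq_ker_of_finrank_eq {U V W : Type*}
    [AddCommGroup U] [AddCommGroup V] [AddCommGroup W] [Module k U] [Module k V] [Module k W]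
    [FiniteDimensional k V] {f : U →ₗ[k] V} {g : V →ₗ[k] W} (hf : Function.Injective f)
    (hg : Function.Surjective g) (hgf : g ∘ₗ f = 0)
    (hdim : Module.finrank k V = Module.finrank k U + Module.finrank k W) :
    LinearMap.range f = LinearMap.ker g := by
  refine Submodule.eq_of_le_of_finrank_eq (LinearMap.range_le_ker_iff.mpr hgf) ?_
  have hrank := LinearMap.finrank_range_add_finrank_ker g
  rw [LinearMap.range_eq_top.mpr hg, finrank_top] at hrank
  rw [LinearMap.finrank_range_of_inj hf]
  omega

section Presentation

variable (k) (n : ℕ)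

def coverMap₁ : ((Fin 0 → k) × ((Fin 0 → k) × (Fin n → k))) →ₗ[k] (Fin n → k) :=
  LinearMap.snd k _ _ ∘ₗ LinearMap.snd k _ _

def coverMap₂ : (k × ((Fin 0 → k) × (Fin n → k))) →ₗ[k] (Fin (n + 1) → k) :=
  snocLinear k n ∘ₗ (LinearMap.snd k _ _ ∘ₗ LinearMap.snd k _ _).prod (LinearMap.fst k _ _)

def coverMap₃ : ((Fin 0 → k) × (k × (Fin n → k))) →ₗ[k] (Fin (n + 1) → k) :=
  (Fin.consLinearEquiv k fun _ => k).toLinearMap ∘ₗ LinearMap.snd k _ _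

def coverMap₄ : (k × (k × (Fin n → k × k))) →ₗ[k] (Fin (n + 1) → k) :=
  snocLinear k n ∘ₗ ((LinearMap.fst k k k).compLeft (Fin n) ∘ₗ
      LinearMap.snd k _ _ ∘ₗ LinearMap.snd k _ _).prod (LinearMap.fst k _ _) +
    (Fin.consLinearEquiv k fun _ => k).toLinearMap ∘ₗ (LinearMap.fst k _ _ ∘ₗ
      LinearMap.snd k _ _).prod ((LinearMap.snd k k k).compLeft (Fin n) ∘ₗ
        LinearMap.snd k _ _ ∘ₗ LinearMap.snd k _ _)

def kernelMap₄ : (Fin (n + 1) → k) →ₗ[k] (k × (k × (Fin n → k × k))) :=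
  (LinearMap.proj (Fin.last n)).prod ((-LinearMap.proj 0).prod
    (LinearMap.pi fun i => (LinearMap.proj i.castSucc).prod (-LinearMap.proj i.succ)))

variable {k n}

theorem coverMap₂_apply (t : k) (z : Fin 0 → k) (x : Fin n → k) :
    coverMap₂ k n (t, z, x) = Fin.snoc x t := rfl

theorem coverMap₃_apply (z : Fin 0 → k) (u : k) (x : Fin n → k) :
    coverMap₃ k n (z, u, x) = Fin.cons u x := rfl

theorem coverMap₄_apply (t u : k) (p : Fin n → k × k) :
    coverMap₄ k n (t, u, p) = Fin.snoc (fun i => (p i).1) t + Fin.cons u (fun i => (p i).2) := rfl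

variable (k n)

def snocConsCover : QHom ((P2 k).dsum ((P3 k).dsum ((P1 k).dpow n))) (snocConsRep k n) where
  f1 := coverMap₁ k n
  f2 := coverMap₂ k n
  f3 := coverMap₃ k n
  f4 := coverMap₄ k n
  comm_a := rfl
  comm_b := rfl
  comm_c := LinearMap.ext fun ((t, z, x) : k × (Fin 0 → k) × (Fin n → k)) => by
    change coverMap₄ k n (t, 0, fun i => (x i, 0)) = coverMap₂ k n (t, z, x)
    rw [coverMap₄_apply, coverMap₂_apply, add_eq_left]
    exact Matrix.cons_zero_zero
  comm_d := LinearMap.ext fun ((z, u, x) : (Fin 0 → k) × k × (Fin n → k)) => by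
    change coverMap₄ k n (0, u, fun i => (0, x i)) = coverMap₃ k n (z, u, x)
    rw [coverMap₄_apply, coverMap₃_apply, add_eq_right]
    exact (snocLinear k n).map_zero

def snocConsSyzygy : QHom ((P4 k).dpow (n + 1)) ((P2 k).dsum ((P3 k).dsum ((P1 k).dpow n))) where
  f1 := 0
  f2 := 0
  f3 := 0
  f4 := kernelMap₄ k n
  comm_a := by rw [LinearMap.zero_comp, LinearMap.comp_zero]
  comm_b := by rw [LinearMap.zero_comp, LinearMap.comp_zero]
  comm_c := by rw [LinearMap.comp_zero]; exact LinearMap.ext fun _ => map_zero (kernelMap₄ k n)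
  comm_d := by rw [LinearMap.comp_zero]; exact LinearMap.ext fun _ => map_zero (kernelMap₄ k n)

variable {k n}

theorem coverMap₁_bijective : Function.Bijective (coverMap₁ k n) :=
  ⟨fun _ _ h => Prod.ext (Subsingleton.elim _ _) (Prod.ext (Subsingleton.elim _ _) h),
    fun x => ⟨(0, 0, x), rfl⟩⟩

theorem coverMap₂_bijective : Function.Bijective (coverMap₂ k n) := by
  refine ⟨fun p p' h => ?_, fun v => ⟨(v (Fin.last n), 0, Fin.init v), Fin.snoc_init_self v⟩⟩
  obtain ⟨hx, ht⟩ := Fin.snoc_injective2 (α := fun _ => k)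
    (show Fin.snoc p.2.2 p.1 = Fin.snoc p'.2.2 p'.1 from h)
  exact Prod.ext ht (Prod.ext (Subsingleton.elim _ _) hx)

theorem coverMap₃_bijective : Function.Bijective (coverMap₃ k n) := by
  refine ⟨fun p p' h => ?_, fun v => ⟨(0, v 0, Fin.tail v), Fin.cons_self_tail v⟩⟩
  exact Prod.ext (Subsingleton.elim _ _) ((Fin.consLinearEquiv k fun _ => k).injective h)

theorem coverMap₄_surjective : Function.Surjective (coverMap₄ k n) := by
  refine fun v => ⟨(v (Fin.last n), 0, fun i => (v i.castSucc, 0)), ?_⟩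
  change Fin.snoc (Fin.init v) (v (Fin.last n)) + Fin.cons 0 0 = v
  rw [Fin.snoc_init_self, show (Fin.cons 0 0 : Fin (n + 1) → k) = 0 from Matrix.cons_zero_zero,
    add_zero]

theorem kernelMap₄_injective : Function.Injective (kernelMap₄ k n) := by
  intro w w' h
  ext i
  refine Fin.lastCases ?_ (fun i => ?_) i
  · exact congrArg Prod.fst h
  · exact congrArg (fun q => (q.2.2 i).1) h

theorem coverMap₄_comp_kernelMap₄ : coverMap₄ k n ∘ₗ kernelMap₄ k n = 0 := by
  refine LinearMap.ext fun w => ?_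
  change Fin.snoc (Fin.init w) (w (Fin.last n)) + Fin.cons ((-w) 0) (Fin.tail (-w)) = 0
  rw [Fin.snoc_init_self, Fin.cons_self_tail, add_neg_cancel]

theorem range_kernelMap₄ : LinearMap.range (kernelMap₄ k n) = LinearMap.ker (coverMap₄ k n) :=
  LinearMap.range_eq_ker_of_finrank_eq kernelMap₄_injective coverMap₄_surjective
    coverMap₄_comp_kernelMap₄ (by simp [Module.finrank_prod, Module.finrank_pi_fintype]; ring)

theorem snocConsSyzygy_shortExact : QShortExact (snocConsSyzygy k n) (snocConsCover k n) := by
  have h₀ : Subsingleton (Fin (n + 1) → Fin 0 → k) := inferInstance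
  refine ⟨⟨fun _ _ _ => h₀.elim _ _, fun _ _ _ => h₀.elim _ _, fun _ _ _ => h₀.elim _ _,
      kernelMap₄_injective⟩,
    ⟨coverMap₁_bijective.2, coverMap₂_bijective.2, coverMap₃_bijective.2, coverMap₄_surjective⟩,
    ?_, ?_, ?_, range_kernelMap₄⟩
  · exact LinearMap.range_zero.trans (LinearMap.ker_eq_bot.mpr coverMap₁_bijective.1).symm
  · exact LinearMap.range_zero.trans (LinearMap.ker_eq_bot.mpr coverMap₂_bijective.1).symm
  · exact LinearMap.range_zero.trans (LinearMap.ker_eq_bot.mpr coverMap₃_bijective.1).symm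

end Presentation

/-- there is an indecomposable representation `M` of `Q` with the
given dimension vector together with a short exact sequence as indicated. -/
theorem stmt7 (k : Type) [Field k] (n : ℕ) :
    ∃ M : QRep k, M.Indecomposable ∧
      Module.finrank k M.V1 = n ∧ Module.finrank k M.V2 = n+1 ∧
      Module.finrank k M.V3 = n+1 ∧ Module.finrank k M.V4 = n+1 ∧
      ∃ (f : QHom ((P4 k).dpow (n+1)) ((P2 k).dsum ((P3 k).dsum ((P1 k).dpow n)))) (g : QHom ((P2 k).dsum ((P3 k).dsum ((P1 k).dpow n))) M), QShortExact f g :=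
  ⟨snocConsRep k n, snocConsRep_indecomposable n, Module.finrank_fin_fun k,
    Module.finrank_fin_fun k, Module.finrank_fin_fun k, Module.finrank_fin_fun k,
    snocConsSyzygy k n, snocConsCover k n, snocConsSyzygy_shortExact⟩
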